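/- arXiv:1404.5421 — 4 statements merged into one kernel-verified Lean document; each statement's English description precedes it below -/
import Mathlib

section
/- Let t > 0 and 0 < β < 1. Define a finite sequence by τ₀ = t and τᵢ = (τ₀ + τ₁ + ⋯ + τ_{i-1})^β for i ≥ 1. Then for every i ≥ 1, τᵢ ≤ (2^{β+1})^{i-1} · t^β. -/
/-!
Write `S i = τ 0 + ⋯ + τ (i - 1)`, so that `τ i = S i ^ β` and `S (i + 1) = S i + S i ^ β`.
Once `S i ≥ 1`, the bound `S i ^ β ≤ S i` gives `S (i + 1) ≤ 2 S i`, hence `τ (i + 1) ≤ 2 ^ β τ i`.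
Iterating from `τ 1 = t ^ β` yields `τ i ≤ (2 ^ β) ^ (i - 1) t ^ β`, which is stronger than the claim.
-/

open Real Finset

section PartialSumPower

variable {β : ℝ} {τ : ℕ → ℝ}
  (hrec : ∀ i : ℕ, 1 ≤ i → τ i = (∑ j ∈ range i, τ j) ^ β)
include hrec

theorem one_le_sum_range_of_rpow_rec (hτ0 : 1 ≤ τ 0) {i : ℕ} (hi : 1 ≤ i) :
    1 ≤ ∑ j ∈ range i, τ j := by
  induction i, hi using Nat.le_induction with
  | base => simpa using hτ0
  | succ i hi ih =>
    have hτi : 0 ≤ τ i := by rw [hrec i hi]; exact rpow_nonneg (by linarith) β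
    rw [sum_range_succ]
    linarith

theorem rpow_rec_succ_le (hτ0 : 1 ≤ τ 0) (hβ0 : 0 ≤ β) (hβ1 : β ≤ 1) {i : ℕ} (hi : 1 ≤ i) :
    τ (i + 1) ≤ 2 ^ β * τ i := by
  set S := ∑ j ∈ range i, τ j
  have hS : 1 ≤ S := one_le_sum_range_of_rpow_rec hrec hτ0 hi
  have hτi : τ i = S ^ β := hrec i hi
  calc τ (i + 1) = (S + S ^ β) ^ β := by rw [hrec (i + 1) (by omega), sum_range_succ, hτi]
    _ ≤ (2 * S) ^ β := by
        gcongr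
        linarith [rpow_le_self_of_one_le hS hβ1]
    _ = 2 ^ β * τ i := by rw [mul_rpow zero_le_two (zero_le_one.trans hS), hτi]

theorem rpow_rec_le_geom (hτ0 : 1 ≤ τ 0) (hβ0 : 0 ≤ β) (hβ1 : β ≤ 1) {i : ℕ} (hi : 1 ≤ i) :
    τ i ≤ (2 ^ β) ^ (i - 1) * τ 0 ^ β := by
  obtain ⟨n, rfl⟩ : ∃ n, i = n + 1 := ⟨i - 1, by omega⟩
  have hτ1 : τ 1 = τ 0 ^ β := by simpa using hrec 1 le_rfl
  rw [Nat.add_sub_cancel, ← hτ1]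
  exact le_geom (u := fun k ↦ τ (k + 1)) (by positivity) n
    fun k _ ↦ rpow_rec_succ_le hrec hτ0 hβ0 hβ1 (Nat.le_add_left 1 k)

end PartialSumPower

theorem stmt_1 (t β : ℝ) (ht : 1 ≤ t) (hβ0 : 0 < β) (hβ1 : β < 1)
    (τ : ℕ → ℝ) (h0 : τ 0 = t)
    (hrec : ∀ i : ℕ, 1 ≤ i → τ i = (∑ j ∈ Finset.range i, τ j) ^ β) :
    ∀ i : ℕ, 1 ≤ i → τ i ≤ (2 ^ (β + 1)) ^ (i - 1) * t ^ β := by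
  intro i hi
  subst h0
  calc τ i ≤ (2 ^ β) ^ (i - 1) * τ 0 ^ β := rpow_rec_le_geom hrec ht hβ0.le hβ1.le hi
    _ ≤ (2 ^ (β + 1)) ^ (i - 1) * τ 0 ^ β := by
        gcongr
        · exact one_le_two
        · linarith
end

section
/- Let t ≥ 1, 0 < β < 1, and N ≥ 1 a natural number. With τ₀ = t and τᵢ = (∑_{j<i} τⱼ)^β, we have ∑_{i=1}^{N} τᵢ ≤ t^β · ∑_{i=1}^{N} (2^{β+1})^{i-1} = ((2^{(β+1)N} − 1)/(2^{β+1} − 1)) · t^β. -/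
open Real Finset

theorem stmt_2 (t β : ℝ) (ht : 1 ≤ t) (hβ0 : 0 < β) (hβ1 : β < 1)
    (N : ℕ) (hN : 1 ≤ N)
    (τ : ℕ → ℝ) (h0 : τ 0 = t)
    (hrec : ∀ i : ℕ, 1 ≤ i → τ i = (∑ j ∈ Finset.range i, τ j) ^ β) :
    ∑ i ∈ Finset.Icc 1 N, τ i ≤ t ^ β * ∑ i ∈ Finset.Icc 1 N, (2 ^ (β + 1)) ^ (i - 1) ∧
    t ^ β * ∑ i ∈ Finset.Icc 1 N, (2 ^ (β + 1)) ^ (i - 1)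
      = ((2 : ℝ) ^ ((β + 1) * N) - 1) / (2 ^ (β + 1) - 1) * t ^ β := by
  -- key invariant on partial sums
  have key : ∀ i : ℕ, 1 ≤ i →
      1 ≤ ∑ j ∈ Finset.range i, τ j ∧
      ∑ j ∈ Finset.range i, τ j ≤ 2 ^ (i - 1) * t := by
    intro i hi
    induction i with
    | zero => omega
    | succ n ih =>
      rcases Nat.eq_or_lt_of_le hi with h1 | h1
      · have hn0 : n = 0 := by omega
        subst hn0
        simp only [zero_add, Finset.sum_range_one, h0]
        refine ⟨ht, ?_⟩
        norm_num
      · have hn : 1 ≤ n := by omega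
        obtain ⟨hlo, hhi⟩ := ih hn
        have hτn : τ n = (∑ j ∈ Finset.range n, τ j) ^ β := hrec n hn
        have hpos : (0:ℝ) ≤ ∑ j ∈ Finset.range n, τ j := by linarith
        have hτn1 : 1 ≤ τ n := by
          rw [hτn]
          exact Real.one_le_rpow hlo hβ0.le
        have hτle : τ n ≤ ∑ j ∈ Finset.range n, τ j := by
          rw [hτn]
          calc (∑ j ∈ Finset.range n, τ j) ^ β
              ≤ (∑ j ∈ Finset.range n, τ j) ^ (1:ℝ) :=
                Real.rpow_le_rpow_of_exponent_le hlo (by linarith)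
            _ = ∑ j ∈ Finset.range n, τ j := Real.rpow_one _
        rw [Finset.sum_range_succ]
        constructor
        · linarith
        · have h2 : (2:ℝ) ^ (n + 1 - 1) = 2 * 2 ^ (n - 1) := by
            have : n + 1 - 1 = (n - 1) + 1 := by omega
            rw [this, pow_succ]; ring
          rw [h2]
          have ht0 : (0:ℝ) ≤ t := by linarith
          nlinarith [pow_nonneg (by norm_num : (0:ℝ) ≤ 2) (n-1)]
  have hr1 : (1:ℝ) < 2 ^ (β + 1) := by
    rw [show (1:ℝ) = (2:ℝ) ^ (0:ℝ) by simp [Real.rpow_zero]]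
    exact Real.rpow_lt_rpow_of_exponent_lt (by norm_num) (by linarith)
  -- termwise bound
  have hterm : ∀ i : ℕ, 1 ≤ i → τ i ≤ t ^ β * (2 ^ (β + 1)) ^ (i - 1) := by
    intro i hi
    obtain ⟨hlo, hhi⟩ := key i hi
    have hτ : τ i = (∑ j ∈ Finset.range i, τ j) ^ β := hrec i hi
    have h1 : τ i ≤ (2 ^ (i - 1) * t) ^ β := by
      rw [hτ]
      exact Real.rpow_le_rpow (by linarith) hhi hβ0.le
    have ht0 : (0:ℝ) ≤ t := by linarith
    have h2 : ((2:ℝ) ^ (i - 1) * t) ^ β = ((2:ℝ) ^ (i-1)) ^ β * t ^ β :=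
      Real.mul_rpow (by positivity) ht0
    have h3 : ((2:ℝ) ^ (i-1)) ^ β ≤ (2 ^ (β + 1)) ^ (i - 1) := by
      rw [← Real.rpow_natCast (2:ℝ) (i-1), ← Real.rpow_mul (by norm_num),
        ← Real.rpow_natCast ((2:ℝ) ^ (β+1)) (i-1),
        ← Real.rpow_mul (by norm_num)]
      apply Real.rpow_le_rpow_of_exponent_le (by norm_num)
      have : (0:ℝ) ≤ (i - 1 : ℕ) := Nat.cast_nonneg _
      nlinarith
    have htβ : (0:ℝ) ≤ t ^ β := Real.rpow_nonneg ht0 β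
    calc τ i ≤ ((2:ℝ) ^ (i-1)) ^ β * t ^ β := by rw [← h2]; exact h1
      _ ≤ (2 ^ (β + 1)) ^ (i - 1) * t ^ β := by
          exact mul_le_mul_of_nonneg_right h3 htβ
      _ = t ^ β * (2 ^ (β + 1)) ^ (i - 1) := by ring
  constructor
  · rw [Finset.mul_sum]
    apply Finset.sum_le_sum
    intro i hi
    exact hterm i (Finset.mem_Icc.mp hi).1
  · have hsum : ∑ i ∈ Finset.Icc 1 N, ((2:ℝ) ^ (β + 1)) ^ (i - 1)
        = ∑ k ∈ Finset.range N, ((2:ℝ) ^ (β + 1)) ^ k := by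
      rw [show Finset.Icc 1 N = Finset.Ico 1 (N+1) by rfl,
        Finset.sum_Ico_eq_sum_range]
      simp
    rw [hsum, geom_sum_eq (ne_of_gt hr1)]
    rw [Real.rpow_mul (by norm_num : (0:ℝ) ≤ 2), Real.rpow_natCast]
    ring
end

section
/- For p₀, α ∈ (0,1) and natural numbers η, μ₁, μ₂, with p₁ = 1 − α^{η+μ₁}(1−p₀) and p₂ = 1 − α^{μ₂}(1−p₀), the simultaneous-cession probability P_sim = (1−p₁)(1−p₂)/(1−p₁p₂) satisfies P_sim ≤ (1−p₀) · α^{η+μ₁}/(1 − α^{η+μ₁}) whenever α^{η+μ₁} < 1 and η+μ₁ ≥ 1. -/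
/-!
Write `a = 1 - p₁ = α^(η+μ₁)(1-p₀)` and `b = 1 - p₂`. Then `1 - p₁p₂ = a + b(1 - a) ≥ b(1 - a)`,
so `P_sim = ab/(1 - p₁p₂) ≤ a/(1 - a)`, and `a ≤ α^(η+μ₁)` turns this into the claimed bound.
-/

lemma mul_div_add_sub_mul_le_div_one_sub {a b : ℝ} (ha₀ : 0 ≤ a) (ha₁ : a < 1) (hb : 0 < b) :
    a * b / (a + b - a * b) ≤ a / (1 - a) := by
  have h1a : 0 < 1 - a := sub_pos.mpr ha₁
  have hden : b * (1 - a) ≤ a + b - a * b := by linarith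
  calc a * b / (a + b - a * b) ≤ a * b / (b * (1 - a)) :=
        div_le_div_of_nonneg_left (by positivity) (by positivity) hden
    _ = a / (1 - a) := by field_simp

theorem stmt_9_general (p₀ α : ℝ) (hp₀0 : 0 < p₀) (hp₀1 : p₀ < 1) (hα0 : 0 < α)
    (η μ₁ μ₂ : ℕ) (hαpow : α ^ (η + μ₁) < 1)
    (p₁ p₂ : ℝ) (hp₁ : p₁ = 1 - α ^ (η + μ₁) * (1 - p₀))
    (hp₂ : p₂ = 1 - α ^ μ₂ * (1 - p₀)) :
    (1 - p₁) * (1 - p₂) / (1 - p₁ * p₂)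
      ≤ (1 - p₀) * (α ^ (η + μ₁) / (1 - α ^ (η + μ₁))) := by
  subst hp₁ hp₂
  set A := α ^ (η + μ₁)
  set t := 1 - p₀
  have ht₀ : 0 < t := sub_pos.mpr hp₀1
  have hA₀ : 0 < A := by positivity
  have hAt : A * t ≤ A := mul_le_of_le_one_right hA₀.le (by linarith)
  calc (1 - (1 - A * t)) * (1 - (1 - α ^ μ₂ * t)) / (1 - (1 - A * t) * (1 - α ^ μ₂ * t))
        = A * t * (α ^ μ₂ * t) / (A * t + α ^ μ₂ * t - A * t * (α ^ μ₂ * t)) := by ring_nf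
    _ ≤ A * t / (1 - A * t) :=
        mul_div_add_sub_mul_le_div_one_sub (by positivity) (hAt.trans_lt hαpow) (by positivity)
    _ ≤ A * t / (1 - A) := by gcongr
    _ = t * (A / (1 - A)) := by ring

theorem stmt_9 (p₀ α : ℝ) (hp₀0 : 0 < p₀) (hp₀1 : p₀ < 1) (hα0 : 0 < α) (hα1 : α < 1)
    (η μ₁ μ₂ : ℕ) (hηm : 1 ≤ η + μ₁) (hαpow : α ^ (η + μ₁) < 1)
    (p₁ p₂ : ℝ) (hp₁ : p₁ = 1 - α ^ (η + μ₁) * (1 - p₀))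
    (hp₂ : p₂ = 1 - α ^ μ₂ * (1 - p₀)) :
    (1 - p₁) * (1 - p₂) / (1 - p₁ * p₂)
      ≤ (1 - p₀) * (α ^ (η + μ₁) / (1 - α ^ (η + μ₁))) :=
  stmt_9_general p₀ α hp₀0 hp₀1 hα0 η μ₁ μ₂ hαpow p₁ p₂ hp₁ hp₂
end

section
/- For real numbers x, y with 0 ≤ x, y ≤ 1 and a positive real n, one has (1 − xy)^n ≤ 1 − x + e^{−ny}. -/
/-! From `1 - t ≤ exp (-t)` we get `(1 - xy)^n ≤ exp (x · (-ny))`, and convexity of `exp` on the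
segment `[-ny, 0]` bounds this by `(1 - x) + x · exp (-ny) ≤ 1 - x + exp (-ny)`. -/

open Real

theorem Real.one_sub_rpow_le_exp_neg_mul {t n : ℝ} (ht : t ≤ 1) (hn : 0 ≤ n) :
    (1 - t) ^ n ≤ exp (-(n * t)) :=
  calc (1 - t) ^ n ≤ exp (-t) ^ n := rpow_le_rpow (by linarith) (one_sub_le_exp_neg t) hn
    _ = exp (-(n * t)) := by rw [← exp_mul]; ring_nf

theorem Real.exp_mul_le_one_sub_add_mul_exp {x : ℝ} (hx0 : 0 ≤ x) (hx1 : x ≤ 1) (s : ℝ) :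
    exp (x * s) ≤ 1 - x + x * exp s := by
  have h := convexOn_exp.2 (Set.mem_univ 0) (Set.mem_univ s) (sub_nonneg.2 hx1) hx0
    (sub_add_cancel 1 x)
  simpa only [smul_eq_mul, mul_zero, zero_add, exp_zero, mul_one] using h

theorem stmt_12 (x y n : ℝ) (hx0 : 0 ≤ x) (hx1 : x ≤ 1) (hy0 : 0 ≤ y) (hy1 : y ≤ 1)
    (hn : 0 < n) :
    (1 - x * y) ^ n ≤ 1 - x + Real.exp (-n * y) := by
  have hxy : x * y ≤ 1 := mul_le_one₀ hx1 hy0 hy1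
  calc (1 - x * y) ^ n ≤ exp (-(n * (x * y))) := one_sub_rpow_le_exp_neg_mul hxy hn.le
    _ = exp (x * (-n * y)) := by ring_nf
    _ ≤ 1 - x + x * exp (-n * y) := exp_mul_le_one_sub_add_mul_exp hx0 hx1 _
    _ ≤ 1 - x + exp (-n * y) := by
      gcongr
      exact mul_le_of_le_one_left (exp_pos _).le hx1
end
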